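/- arXiv:1706.05460 — 3 statements merged into one kernel-verified Lean document; each statement's English description precedes it below -/
import Mathlib

section
/- Let q = p^f, m ≥ 2, and let H_0 be the set of elements x̄ ∈ F_{q^m}*/F_q* such that Tr_{q^m/q}(x) = 0 for a representative x of x̄ with Tr_{q^m/q}(x) ∈ {0,1}. Then for any nontrivial multiplicative character χ of F_{q^m} whose order divides (q^m−1)/(q−1) (viewed as a character of F_{q^m}*/F_q*), χ(H_0) := Σ_{h∈H_0} χ(h) = G_{q^m}(χ)/q. -/
open Finset

/-- The canonical additive character `ψ(x) = ζ_p ^ Tr(x)` of a finite field of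
characteristic `p`. -/
noncomputable def stdAddChar (p : ℕ) (F : Type) [Field F] [Fintype F] [Algebra (ZMod p) F]
    (x : F) : ℂ :=
  Complex.exp (2 * Real.pi * Complex.I * ((Algebra.trace (ZMod p) F x).val : ℂ) / (p : ℂ))

/-- The Gauss sum `G_q(χ) = ∑_{x ∈ F_q*} χ(x) ψ(x)` of a multiplicative character `χ`
with respect to the canonical additive character.  (Note `χ 0 = 0` for a `MulChar`.) -/
noncomputable def gaussSum' (p : ℕ) (F : Type) [Field F] [Fintype F] [Algebra (ZMod p) F]
    (χ : MulChar F ℂ) : ℂ :=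
  ∑ x : F, χ x * stdAddChar p F x

/-!
Since `orderOf χ` divides `(q^m - 1)/(q - 1)` and every element of `F_q*` is a norm
`N(y) = y ^ ((q^m - 1)/(q - 1))`, the character `χ` is trivial on `F_q*`. Hence the sums
`S t = ∑_{Tr x = t} χ x` do not depend on `t ≠ 0`, and orthogonality of `χ` gives
`S 0 + (q - 1) S 1 = 0`. Writing the canonical additive character of `F_{q^m}` as that of `F_q`
composed with `Tr`, the Gauss sum is `∑_t ψ(t) S t = S 0 - S 1`, as `∑_{t ≠ 0} ψ(t) = -1`.
Eliminating `S 1` gives `(q - 1) G(χ) = q S 0`.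
-/

namespace MulChar

variable {F E R : Type*} [Field F] [Field E] [Algebra F E]

theorem apply_algebraMap_eq_one [Finite E] [CommMonoidWithZero R] (χ : MulChar E R)
    (hχ : χ ^ ((Nat.card E - 1) / (Nat.card F - 1)) = 1) {a : F} (ha : a ≠ 0) :
    χ (algebraMap F E a) = 1 := by
  obtain ⟨y, rfl⟩ := FiniteField.norm_surjective F E a
  have hy : y ≠ 0 := by rintro rfl; simp at ha
  have h := pow_apply_coe χ ((Nat.card E - 1) / (Nat.card F - 1)) (Units.mk0 y hy)
  rw [hχ, one_apply_coe] at h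
  rw [FiniteField.algebraMap_norm_eq_pow, map_pow]
  simpa using h.symm

theorem sum_filter_ne_zero_and [Fintype E] [CommSemiring R] (χ : MulChar E R) (P : E → Prop)
    [DecidablePred P] [DecidablePred fun x => x ≠ 0 ∧ P x] :
    ∑ x with x ≠ 0 ∧ P x, χ x = ∑ x with P x, χ x := by
  simp only [sum_filter]
  refine sum_congr rfl fun x _ => ?_
  by_cases hx : x = 0 <;> simp [hx]

variable [Fintype E] [DecidableEq F] [CommRing R]

theorem sum_fiber_eq_sum_fiber_one (χ : MulChar E R)
    (hχ : ∀ a : F, a ≠ 0 → χ (algebraMap F E a) = 1) (L : E →ₗ[F] F) {t : F} (ht : t ≠ 0) :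
    ∑ x with L x = t, χ x = ∑ x with L x = 1, χ x := by
  simp only [sum_filter]
  refine (Fintype.sum_equiv (Equiv.mulLeft₀ (algebraMap F E t) (by simpa using ht)) _ _
    fun x => ?_).symm
  have hL : L (algebraMap F E t * x) = t * L x := by
    rw [← Algebra.smul_def, map_smul, smul_eq_mul]
  simp [hL, hχ t ht, mul_eq_left₀ ht]

theorem card_sub_one_mul_sum_mul_addChar [Fintype F] [IsDomain R] (χ : MulChar E R)
    (hχ₁ : χ ≠ 1) (hχ : ∀ a : F, a ≠ 0 → χ (algebraMap F E a) = 1) (ψ : AddChar F R) (hψ : ψ ≠ 1)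
    (L : E →ₗ[F] F) :
    ((Fintype.card F : R) - 1) * ∑ x, χ x * ψ (L x) = Fintype.card F * ∑ x with L x = 0, χ x := by
  set S : F → R := fun t => ∑ x with L x = t, χ x
  have hS : ∀ t, S t = S 1 + if t = 0 then S 0 - S 1 else 0 := by
    intro t
    split_ifs with ht
    · rw [ht]; ring
    · rw [add_zero]; exact sum_fiber_eq_sum_fiber_one χ hχ L ht
  have hS_sum : ∑ t, S t = 0 := by
    rw [sum_fiberwise univ L]
    exact sum_eq_zero_of_ne_one hχ₁
  have hψ_sum : ∑ t, ψ t = 0 := AddChar.sum_eq_zero_of_ne_one hψ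
  have hG : ∑ x, χ x * ψ (L x) = ∑ t, ψ t * S t := by
    rw [← sum_fiberwise univ L]
    refine sum_congr rfl fun t _ => ?_
    rw [mul_sum]
    refine sum_congr rfl fun x hx => ?_
    rw [(mem_filter.1 hx).2, mul_comm]
  rw [sum_congr rfl fun t _ => hS t] at hS_sum
  rw [sum_congr rfl fun t _ => congrArg (ψ t * ·) (hS t)] at hG
  simp only [mul_add, sum_add_distrib, ← sum_mul, hψ_sum, mul_ite, mul_zero, sum_ite_eq',
    mem_univ, if_true, AddChar.map_zero_eq_one, sum_const, card_univ, nsmul_eq_mul] at hS_sum hG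
  rw [hG]
  linear_combination -hS_sum

end MulChar

section TraceAddChar

variable (p : ℕ) [NeZero p]

noncomputable def traceAddChar (F : Type) [Field F] [Algebra (ZMod p) F] : AddChar F ℂ :=
  ZMod.stdAddChar.compAddMonoidHom (Algebra.trace (ZMod p) F).toAddMonoidHom

theorem stdAddChar_eq_traceAddChar (F : Type) [Field F] [Fintype F] [Algebra (ZMod p) F]
    (x : F) : stdAddChar p F x = traceAddChar p F x := by
  simp [stdAddChar, traceAddChar, ZMod.stdAddChar_apply, ZMod.toCircle_apply]

variable [Fact p.Prime]

theorem traceAddChar_ne_one (F : Type) [Field F] [Finite F] [Algebra (ZMod p) F] :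
    traceAddChar p F ≠ 1 := by
  obtain ⟨x, hx⟩ := Algebra.trace_surjective (ZMod p) F 1
  intro h
  have h1 := DFunLike.congr_fun h x
  rw [AddChar.one_apply, traceAddChar, AddChar.compAddMonoidHom_apply,
    LinearMap.toAddMonoidHom_coe, hx, ← AddChar.map_zero_eq_one (ZMod.stdAddChar (N := p)),
    ZMod.injective_stdAddChar.eq_iff] at h1
  exact one_ne_zero h1

theorem traceAddChar_trace {F E : Type} [Field F] [Field E] [Finite F] [Finite E]
    [Algebra (ZMod p) F] [Algebra (ZMod p) E] [Algebra F E] [IsScalarTower (ZMod p) F E] (x : E) :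
    traceAddChar p F (Algebra.trace F E x) = traceAddChar p E x := by
  simp only [traceAddChar, AddChar.compAddMonoidHom_apply, LinearMap.toAddMonoidHom_coe,
    Algebra.trace_trace x]

end TraceAddChar

open Classical in
/-- Since `χ` is constant on cosets of `F_q*` and each class of `H₀` consists of `q − 1`
trace-zero field elements, `χ(H₀) = (q−1)⁻¹ ∑_{x ≠ 0, Tr(x)=0} χ(x)`. -/
theorem singer_character_value_general (p : ℕ) [Fact p.Prime]
    (F : Type) [Field F] [Fintype F]
    (E : Type) [Field E] [Fintype E] [Algebra (ZMod p) E] [Algebra F E]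
    (χ : MulChar E ℂ) (hχ : χ ≠ 1)
    (hord : orderOf χ ∣ (Fintype.card E - 1) / (Fintype.card F - 1)) :
    ((Fintype.card F : ℂ) - 1)⁻¹ *
        ∑ x ∈ univ.filter (fun x : E => x ≠ 0 ∧ Algebra.trace F E x = 0), χ x =
      gaussSum' p E χ / (Fintype.card F : ℂ) := by
  have : CharP E p := charP_of_injective_algebraMap (algebraMap (ZMod p) E).injective p
  have : CharP F p := (algebraMap F E).charP (algebraMap F E).injective p
  let := ZMod.algebra F p
  have : IsScalarTower (ZMod p) F E := .of_algebraMap_eq' (RingHom.ext_zmod _ _)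
  have hχF : ∀ a : F, a ≠ 0 → χ (algebraMap F E a) = 1 := fun a ha =>
    χ.apply_algebraMap_eq_one (orderOf_dvd_iff_pow_eq_one.1
      (by simpa only [Nat.card_eq_fintype_card] using hord)) ha
  have key := χ.card_sub_one_mul_sum_mul_addChar hχ hχF _ (traceAddChar_ne_one p F)
    (Algebra.trace F E)
  simp_rw [traceAddChar_trace, ← stdAddChar_eq_traceAddChar] at key
  have hq : (Fintype.card F : ℂ) - 1 ≠ 0 :=
    sub_ne_zero.2 (Nat.cast_ne_one.2 Fintype.one_lt_card.ne')
  rw [χ.sum_filter_ne_zero_and, gaussSum']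
  field_simp
  linear_combination -key

open Classical in
/-- Character values of the Singer difference set: `H₀` is the set of classes in
`F_{q^m}*/F_q*` with a trace-zero representative.  For a nontrivial multiplicative
character `χ` of `F_{q^m}` of order dividing `(q^m−1)/(q−1)`, `χ(H₀) = G_{q^m}(χ)/q`.
Since `χ` is constant on cosets of `F_q*` and each class of `H₀` consists of `q − 1`
trace-zero field elements, `χ(H₀) = (q−1)⁻¹ ∑_{x ≠ 0, Tr(x)=0} χ(x)`. -/
theorem singer_character_value (p : ℕ) [Fact p.Prime]
    (F : Type) [Field F] [Fintype F]
    (E : Type) [Field E] [Fintype E] [Algebra (ZMod p) E] [Algebra F E]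
    (m : ℕ) (hm : 2 ≤ m) (hcard : Fintype.card E = Fintype.card F ^ m)
    (χ : MulChar E ℂ) (hχ : χ ≠ 1)
    (hord : orderOf χ ∣ (Fintype.card E - 1) / (Fintype.card F - 1)) :
    ((Fintype.card F : ℂ) - 1)⁻¹ *
        ∑ x ∈ univ.filter (fun x : E => x ≠ 0 ∧ Algebra.trace F E x = 0), χ x =
      gaussSum' p E χ / (Fintype.card F : ℂ) :=
  singer_character_value_general p F E χ hχ hord
end

section
/- Suppose Cay(F_{q^m}, C_0^{(N,q^m)}) is a cyclotomic strongly regular graph in the subfield case with N = (q^m−1)/(q−1), so C_0^{(N,q^m)} = F_q*. Then the connection set E of the elliptic lifting construction equals {x ∈ F_{q^{2m}}* : Tr_{q^m/q}(x^{q^m+1}) = 0}, and x ↦ Tr_{q^m/q}(x^{q^m+1}) is a nondegenerate F_q-valued quadratic form of elliptic type on F_{q^{2m}} viewed as an F_q-vector space. -/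
/-!
Put `Q = q^m`. As `E/K` is quadratic with Galois group generated by `x ↦ x^Q`, the norm is
`N(x) = x^(Q+1)`; it is a `K`-quadratic form with polar form `Tr_{E/K}(x y^Q)`, so
`Φ = Tr_{K/F} ∘ N` is an `F`-quadratic form with the nondegenerate polar form `Tr_{E/F}(x y^Q)`.
Since `ω^N = N_{K/F}(ω)` is a nonzero element of `F`, whether `Tr_{K/F}(ω^i)` vanishes depends
only on `i mod N`, which identifies the union of cosets `γ^i⟨γ^N⟩` with the nonzero zeros of `Φ`.

The norm is `(Q+1)`-to-one on `E^*` and `ker Tr_{K/F}` has `q^(m-1)` elements, so `Φ` has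
`q^(2m-1) - q^m + q^(m-1)` zeros. If `W` is totally singular of dimension `d` and `W^⊥ ∖ W`
contains no zero of `Φ`, then each coset `y + W` with `y ∉ W^⊥` contains exactly `|W|/q` zeros,
which gives `q^d + q^(2m-1) - q^(2m-d-1)` zeros in total; comparing the two counts forces
`d = m - 1`. A totally singular `W` of dimension `≥ m` satisfies `W = W^⊥`, so it is excluded,
and one of dimension `< m - 1` extends by a zero of `Φ` in `W^⊥ ∖ W`.
-/

open Finset
open LinearMap (BilinForm)

@[to_additive]
theorem MonoidHom.card_fiber_of_surjective {G M : Type*} [Group G] [Fintype G]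
    [Group M] [Fintype M] [DecidableEq M] (f : G →* M) (hf : Function.Surjective f) (y : M) :
    #{g | f g = y} * Fintype.card M = Fintype.card G := by
  calc #{g | f g = y} * Fintype.card M = ∑ z : M, #{g | f g = z} := by
        rw [sum_congr rfl fun z _ ↦ card_fiber_eq_of_mem_range f (hf z) (hf y), sum_const,
          card_univ, smul_eq_mul, mul_comm]
    _ = Fintype.card G := by
        rw [← card_univ (α := G), card_eq_sum_card_fiberwise fun _ _ ↦ mem_univ (f _)]

theorem LinearMap.card_fiber_mul_card {F M : Type*} [Field F] [Fintype F] [DecidableEq F]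
    [AddCommGroup M] [Module F M] [Fintype M] {f : M →ₗ[F] F} (hf : f ≠ 0) (a : F) :
    #{v | f v = a} * Fintype.card F = Fintype.card M :=
  f.toAddMonoidHom.card_fiber_of_surjective (f.surjective_of_ne_zero hf) a

theorem Module.finrank_eq_of_card_eq_pow {F V : Type*} [Field F] [Fintype F] [AddCommGroup V]
    [Module F V] [Fintype V] {n : ℕ} (h : Fintype.card V = Fintype.card F ^ n) :
    Module.finrank F V = n :=
  Nat.pow_right_injective Fintype.one_lt_card (Module.card_eq_pow_finrank.symm.trans h)

theorem add_one_eq_of_pow_add_pow_eq {q m d : ℕ} (hq : 1 < q) (hd : d ≤ 2 * m)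
    (h : q ^ m + q ^ (2 * m - d) = q ^ (m + 1) + q ^ (d + 1)) : d + 1 = m := by
  rcases lt_trichotomy (d + 1) m with hlt | heq | hgt
  · have h1 : q ^ (m + 2) ≤ q ^ (2 * m - d) := Nat.pow_le_pow_right (by omega) (by omega)
    have h2 : q ^ (d + 1) < q ^ (m + 1) := Nat.pow_lt_pow_right hq (by omega)
    have h3 : q ^ (m + 1) * 2 ≤ q ^ (m + 2) := by rw [pow_succ _ (m + 1)]; gcongr; omega
    omega
  · exact heq
  · have h1 : q ^ (2 * m - d) ≤ q ^ m := Nat.pow_le_pow_right (by omega) (by omega)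
    have h2 : q ^ (m + 1) ≤ q ^ (d + 1) := Nat.pow_le_pow_right (by omega) (by omega)
    have h3 : q ^ m < q ^ (m + 1) := Nat.pow_lt_pow_right hq (by omega)
    omega

section TotallySingular

variable {F V : Type*} [Field F] [AddCommGroup V] [Module F V] (Φ : QuadraticForm F V)

def IsTotallySingular (W : Submodule F V) : Prop := ∀ x ∈ W, Φ x = 0

variable {Φ} {W : Submodule F V}

theorem IsTotallySingular.le_orthogonal (hW : IsTotallySingular Φ W) :
    W ≤ BilinForm.orthogonal Φ.polarBilin W := fun x hx w hw ↦ by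
  simp [QuadraticMap.polar, hW _ hx, hW _ hw, hW _ (W.add_mem hw hx)]

open Classical in
theorem IsTotallySingular.card_singular_coset_mul [Fintype F] [DecidableEq F] [Fintype V]
    (hW : IsTotallySingular Φ W) {y : V} (hy : y ∉ BilinForm.orthogonal Φ.polarBilin W) :
    #{w : W | Φ (y + w) = 0} * Fintype.card F = Fintype.card W := by
  set ℓ : W →ₗ[F] F := (Φ.polarBilin y).domRestrict W
  have hℓ : ℓ ≠ 0 := fun hℓ ↦ hy fun w hw ↦ by
    simpa [ℓ, QuadraticMap.polar_comm] using LinearMap.congr_fun hℓ ⟨w, hw⟩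
  rw [← ℓ.card_fiber_mul_card hℓ (-Φ y)]
  congr 2
  ext w
  have : Φ (y + w) = Φ y + ℓ w := by
    simp [ℓ, QuadraticMap.polar, hW w w.2]
  simp only [this, mem_filter, mem_univ, true_and]
  constructor <;> intro h <;> linear_combination h

open Classical in
theorem IsTotallySingular.card_singular_notMem_orthogonal_mul [Fintype F] [DecidableEq F]
    [Fintype V] (hW : IsTotallySingular Φ W) :
    #{y | y ∉ BilinForm.orthogonal Φ.polarBilin W ∧ Φ y = 0} * Fintype.card F =
      #{y | y ∉ BilinForm.orthogonal Φ.polarBilin W} := by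
  set P := BilinForm.orthogonal Φ.polarBilin W
  set A : Finset V := {y | y ∉ P}
  have htranslate (w : W) : #{y ∈ A | Φ (y + w) = 0} = #{y | y ∉ P ∧ Φ y = 0} := by
    have hw : (w : V) ∈ P := hW.le_orthogonal w.2
    refine card_nbij' (· + w) (· - w) ?_ ?_ (fun _ _ ↦ add_sub_cancel_right _ _)
      (fun _ _ ↦ sub_add_cancel _ _) <;> intro y hy <;>
      simp_all [A, P.add_mem_iff_left hw, P.sub_mem_iff_left hw]
  apply Nat.eq_of_mul_eq_mul_left (Fintype.card_pos (α := W))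
  calc Fintype.card W * (#{y | y ∉ P ∧ Φ y = 0} * Fintype.card F)
      = (∑ w : W, #{y ∈ A | Φ (y + w) = 0}) * Fintype.card F := by
        rw [sum_congr rfl fun w _ ↦ htranslate w, sum_const, card_univ, smul_eq_mul, mul_assoc]
    _ = ∑ y ∈ A, #{w : W | Φ (y + w) = 0} * Fintype.card F := by
        rw [← sum_mul]
        exact congrArg (· * _) (sum_card_bipartiteAbove_eq_sum_card_bipartiteBelow _)
    _ = Fintype.card W * #A := by
        rw [sum_congr rfl fun y hy ↦ hW.card_singular_coset_mul (mem_filter.1 hy).2, sum_const,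
          smul_eq_mul, mul_comm]

open Classical in
theorem IsTotallySingular.card_singular_mul_add_card_orthogonal [Fintype F] [DecidableEq F]
    [Fintype V] (hW : IsTotallySingular Φ W)
    (hP : ∀ y ∈ BilinForm.orthogonal Φ.polarBilin W, Φ y = 0 → y ∈ W) :
    #{x | Φ x = 0} * Fintype.card F + Nat.card (BilinForm.orthogonal Φ.polarBilin W) =
      Nat.card W * Fintype.card F + Fintype.card V := by
  have hsplit := card_filter_add_card_filter_not (s := ({x | Φ x = 0} : Finset V))
    (· ∈ BilinForm.orthogonal Φ.polarBilin W)
  have hin : #{x | Φ x = 0 ∧ x ∈ BilinForm.orthogonal Φ.polarBilin W} = #{x | x ∈ W} :=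
    congrArg card <| filter_congr fun x _ ↦
      ⟨fun h ↦ hP x h.2 h.1, fun hx ↦ ⟨hW x hx, hW.le_orthogonal hx⟩⟩
  have hout : #{x | Φ x = 0 ∧ x ∉ BilinForm.orthogonal Φ.polarBilin W} =
      #{x | x ∉ BilinForm.orthogonal Φ.polarBilin W ∧ Φ x = 0} :=
    congrArg card <| filter_congr fun x _ ↦ and_comm
  have hV := card_filter_add_card_filter_not (s := (univ : Finset V))
    (· ∈ BilinForm.orthogonal Φ.polarBilin W)
  simp only [filter_filter, hin, hout] at hsplit
  rw [← hsplit, add_mul, hW.card_singular_notMem_orthogonal_mul, Nat.card_eq_fintype_card,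
    Nat.card_eq_fintype_card, Fintype.card_subtype, Fintype.card_subtype, ← card_univ (α := V),
    ← hV]
  ring

theorem IsTotallySingular.sup_span_singleton (hW : IsTotallySingular Φ W) {y : V}
    (hy : y ∈ BilinForm.orthogonal Φ.polarBilin W) (hy0 : Φ y = 0) :
    IsTotallySingular Φ (W ⊔ Submodule.span F {y}) := by
  intro x hx
  obtain ⟨w, hw, z, hz, rfl⟩ := Submodule.mem_sup.1 hx
  obtain ⟨a, rfl⟩ := Submodule.mem_span_singleton.1 hz
  have hpolar : QuadraticMap.polar Φ w (a • y) = 0 := by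
    rw [QuadraticMap.polar_smul_right, ← QuadraticMap.polarBilin_apply_apply, hy w hw, smul_zero]
  have hsum : Φ (w + a • y) = Φ w + Φ (a • y) + QuadraticMap.polar Φ w (a • y) := by
    rw [QuadraticMap.polar]
    ring
  rw [hsum, hW w hw, QuadraticMap.map_smul, hy0, hpolar, smul_zero, zero_add, add_zero]

end TotallySingular

section Elliptic

variable {F V : Type*} [Field F] [Fintype F] [DecidableEq F] [AddCommGroup V] [Module F V]
  [Fintype V] {Φ : QuadraticForm F V} {m : ℕ}

/-- With `q = Fintype.card F`, `hZ` says that `Φ` has `q^(2m-1) - q^m + q^(m-1)` zeros (the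
count for an elliptic form), multiplied by `q` to stay in `ℕ`. -/
theorem IsTotallySingular.finrank_add_one_eq {W : Submodule F V}
    (hV : Module.finrank F V = 2 * m) (hB : Φ.polarBilin.Nondegenerate)
    (hZ : #{x | Φ x = 0} * Fintype.card F + Fintype.card F ^ (m + 1) =
      Fintype.card F ^ (2 * m) + Fintype.card F ^ m)
    (hW : IsTotallySingular Φ W)
    (hP : ∀ y ∈ BilinForm.orthogonal Φ.polarBilin W, Φ y = 0 → y ∈ W) :
    Module.finrank F W + 1 = m := by
  have hcount := hW.card_singular_mul_add_card_orthogonal hP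
  rw [Module.natCard_eq_pow_finrank (K := F) (V := BilinForm.orthogonal Φ.polarBilin W),
    Module.natCard_eq_pow_finrank (K := F) (V := W), BilinForm.finrank_orthogonal hB,
    Nat.card_eq_fintype_card, Module.card_eq_pow_finrank (K := F) (V := V), hV,
    ← pow_succ] at hcount
  refine add_one_eq_of_pow_add_pow_eq (Fintype.one_lt_card (α := F)) (hV ▸ W.finrank_le) ?_
  omega

theorem IsTotallySingular.finrank_le_sub_one {W : Submodule F V}
    (hV : Module.finrank F V = 2 * m) (hB : Φ.polarBilin.Nondegenerate)
    (hZ : #{x | Φ x = 0} * Fintype.card F + Fintype.card F ^ (m + 1) =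
      Fintype.card F ^ (2 * m) + Fintype.card F ^ m)
    (hW : IsTotallySingular Φ W) :
    Module.finrank F W ≤ m - 1 := by
  have hle := Submodule.finrank_mono hW.le_orthogonal
  rw [BilinForm.finrank_orthogonal hB, hV] at hle
  suffices Module.finrank F W ≠ m by omega
  intro hd
  have hWP : W = BilinForm.orthogonal Φ.polarBilin W :=
    Submodule.eq_of_le_of_finrank_eq hW.le_orthogonal (by
      rw [BilinForm.finrank_orthogonal hB, hV]; omega)
  have := hW.finrank_add_one_eq hV hB hZ fun y hy _ ↦ hWP ▸ hy
  omega

theorem exists_isTotallySingular_finrank_eq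
    (hV : Module.finrank F V = 2 * m) (hB : Φ.polarBilin.Nondegenerate)
    (hZ : #{x | Φ x = 0} * Fintype.card F + Fintype.card F ^ (m + 1) =
      Fintype.card F ^ (2 * m) + Fintype.card F ^ m) {d : ℕ} (hd : d ≤ m - 1) :
    ∃ W : Submodule F V, IsTotallySingular Φ W ∧ Module.finrank F W = d := by
  induction d with
  | zero => exact ⟨⊥, fun x hx ↦ by simp [(Submodule.mem_bot F).1 hx], finrank_bot F V⟩
  | succ d ih =>
    obtain ⟨W, hW, rfl⟩ := ih (by omega)
    have hP : ¬ ∀ y ∈ BilinForm.orthogonal Φ.polarBilin W, Φ y = 0 → y ∈ W :=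
      fun hP ↦ by have := hW.finrank_add_one_eq hV hB hZ hP; omega
    push Not at hP
    obtain ⟨y, hyP, hy0, hyW⟩ := hP
    exact ⟨_, hW.sup_span_singleton hyP hy0, Submodule.finrank_sup_span_singleton hyW⟩

end Elliptic

section QuadraticExtension

variable {K L : Type*} [Field K] [Fintype K] [Field L] [Fintype L] [Algebra K L]

theorem algebraMap_norm_eq_pow_card_add_one (h : Module.finrank K L = 2) (x : L) :
    algebraMap K L (Algebra.norm K x) = x ^ (Fintype.card K + 1) := by
  rw [FiniteField.algebraMap_norm_eq_pow_sum, h, Nat.card_eq_fintype_card]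
  simp [Finset.sum_range_succ, add_comm]

theorem algebraMap_trace_eq_add_pow_card (h : Module.finrank K L = 2) (x : L) :
    algebraMap K L (Algebra.trace K L x) = x + x ^ Fintype.card K := by
  rw [FiniteField.algebraMap_trace_eq_sum_pow, h, Nat.card_eq_fintype_card]
  simp [Finset.sum_range_succ]

theorem card_norm_fiber_mul [DecidableEq K] [DecidableEq L] {d : K} (hd : d ≠ 0) :
    #{x : L | Algebra.norm K x = d} * (Fintype.card K - 1) = Fintype.card L - 1 := by
  have hunits : #{u : Lˣ | Units.map (Algebra.norm K : L →* K) u = Units.mk0 d hd} =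
      #{x : L | Algebra.norm K x = d} := by
    refine card_bij (fun u _ ↦ (u : L)) ?_ (fun _ _ _ _ ↦ Units.ext) ?_
    · intro u hu
      simpa [Units.ext_iff] using hu
    · intro x hx
      have hx0 : x ≠ 0 := by
        rintro rfl
        simp [eq_comm, hd] at hx
      exact ⟨Units.mk0 x hx0, by simpa [Units.ext_iff] using hx, rfl⟩
  rw [← hunits, ← Fintype.card_units, ← Fintype.card_units]
  exact (Units.map (Algebra.norm K : L →* K)).card_fiber_of_surjective
    (FiniteField.unitsMap_norm_surjective K L) (Units.mk0 d hd)

theorem card_norm_fiber [DecidableEq K] [DecidableEq L] (h : Module.finrank K L = 2) {d : K}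
    (hd : d ≠ 0) : #{x : L | Algebra.norm K x = d} = Fintype.card K + 1 := by
  have hK : 1 < Fintype.card K := Fintype.one_lt_card
  have hsq : Fintype.card K ^ 2 - 1 = (Fintype.card K + 1) * (Fintype.card K - 1) := by
    zify [hK.le, Nat.one_le_pow 2 (Fintype.card K) (by omega)]
    ring
  refine Nat.eq_of_mul_eq_mul_right (by omega) ((card_norm_fiber_mul hd).trans ?_)
  rw [Module.card_eq_pow_finrank (K := K) (V := L), h, hsq]

theorem pow_card_pow_card (h : Module.finrank K L = 2) (y : L) :
    (y ^ Fintype.card K) ^ Fintype.card K = y := by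
  rw [← pow_mul, ← sq, ← h, ← Module.card_eq_pow_finrank, FiniteField.pow_card]

theorem norm_add_eq_add_trace (h : Module.finrank K L = 2) (x y : L) :
    Algebra.norm K (x + y) =
      Algebra.norm K x + Algebra.norm K y + Algebra.trace K L (x * y ^ Fintype.card K) := by
  apply (algebraMap K L).injective
  have hfrob : (x + y) ^ Fintype.card K = x ^ Fintype.card K + y ^ Fintype.card K :=
    map_add (FiniteField.frobeniusAlgHom K L) x y
  simp only [map_add, algebraMap_norm_eq_pow_card_add_one h, algebraMap_trace_eq_add_pow_card h,
    mul_pow, pow_card_pow_card h, pow_succ, hfrob]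
  ring

variable (K) in
noncomputable def normForm (h : Module.finrank K L = 2) : QuadraticForm K L where
  toFun := Algebra.norm K
  toFun_smul a x := by
    rw [Algebra.smul_def, map_mul, Algebra.norm_algebraMap, h, sq, smul_eq_mul]
  exists_companion' :=
    ⟨(Algebra.traceForm K L).compl₂ (FiniteField.frobeniusAlgHom K L).toLinearMap,
      fun x y ↦ norm_add_eq_add_trace h x y⟩

theorem normForm_apply (h : Module.finrank K L = 2) (x : L) :
    normForm K h x = Algebra.norm K x := rfl

theorem polar_normForm (h : Module.finrank K L = 2) (x y : L) :
    QuadraticMap.polar (normForm K h) x y = Algebra.trace K L (x * y ^ Fintype.card K) := by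
  simp only [QuadraticMap.polar, normForm_apply, norm_add_eq_add_trace h]
  ring

end QuadraticExtension

section TraceNormForm

variable (F : Type*) {K L : Type*} [Field F] [Field K] [Fintype K] [Field L] [Fintype L]
  [Algebra F K] [Algebra K L] [Algebra F L] [IsScalarTower F K L]

noncomputable def traceNormForm (h : Module.finrank K L = 2) : QuadraticForm F L :=
  (Algebra.trace F K).compQuadraticMap' (normForm K h)

variable {F}

theorem traceNormForm_apply (h : Module.finrank K L = 2) (x : L) :
    traceNormForm F h x = Algebra.trace F K (Algebra.norm K x) := rfl

theorem polar_traceNormForm (h : Module.finrank K L = 2) (x y : L) :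
    QuadraticMap.polar (traceNormForm F h) x y = Algebra.trace F L (x * y ^ Fintype.card K) := by
  rw [traceNormForm, LinearMap.compQuadraticMap_polar, polar_normForm, Algebra.trace_trace]

theorem nondegenerate_polarBilin_traceNormForm [Fintype F] (h : Module.finrank K L = 2) :
    (traceNormForm F h).polarBilin.Nondegenerate := by
  refine LinearMap.BilinForm.Nondegenerate.ofSeparatingLeft fun x hx ↦ ?_
  refine (traceForm_nondegenerate F L).1 x fun z ↦ ?_
  have := hx (z ^ Fintype.card K)
  rwa [QuadraticMap.polarBilin_apply_apply, polar_traceNormForm, pow_card_pow_card h] at this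

theorem card_traceNormForm_eq_zero [Fintype F] [DecidableEq F] [DecidableEq K] [DecidableEq L]
    (h : Module.finrank K L = 2) :
    #{x | traceNormForm F h x = 0} * Fintype.card F + Fintype.card K * Fintype.card F =
      Fintype.card K ^ 2 + Fintype.card K := by
  set T : Finset K := {d | Algebra.trace F K d = 0}
  have hT : #T * Fintype.card F = Fintype.card K :=
    (Algebra.trace F K).toAddMonoidHom.card_fiber_of_surjective (Algebra.trace_surjective F K) 0
  have h0 : (0 : K) ∈ T := by simp [T]
  have hfiber : ∀ d ∈ T, #{x ∈ {x | traceNormForm F h x = 0} | Algebra.norm K x = d} =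
      #{x : L | Algebra.norm K x = d} := fun d hd ↦ by
    congr 1
    ext x
    simp only [mem_filter, mem_univ, true_and, and_iff_right_iff_imp]
    rintro rfl
    simpa [T, traceNormForm_apply] using hd
  have hzero : #{x : L | Algebra.norm K x = 0} = 1 := by
    rw [card_eq_one]
    exact ⟨0, by ext x; simp⟩
  have hcount : #{x | traceNormForm F h x = 0} = 1 + #(T.erase 0) * (Fintype.card K + 1) := by
    rw [card_eq_sum_card_fiberwise (f := Algebra.norm K) (t := T) (fun x hx ↦ by
      simpa [T, traceNormForm_apply] using (mem_filter.1 (mem_coe.1 hx)).2),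
      sum_congr rfl hfiber, ← add_sum_erase T _ h0, hzero,
      sum_congr rfl fun d hd ↦ card_norm_fiber h (ne_of_mem_erase hd), sum_const, smul_eq_mul]
  rw [← card_erase_add_one h0] at hT
  calc #{x | traceNormForm F h x = 0} * Fintype.card F + Fintype.card K * Fintype.card F
      = ((#(T.erase 0) + 1) * Fintype.card F) * (Fintype.card K + 1) := by
        rw [hcount]; ring
    _ = Fintype.card K ^ 2 + Fintype.card K := by rw [hT]; ring

end TraceNormForm

section ConnectionSet

variable {F K E : Type*} [Field F] [Fintype F] [Field K] [Fintype K] [Algebra F K]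

theorem trace_pow_add_mul {N : ℕ} (hN : N = (Fintype.card K - 1) / (Fintype.card F - 1))
    (ω : K) (i k : ℕ) :
    Algebra.trace F K (ω ^ (i + N * k)) = Algebra.norm F ω ^ k * Algebra.trace F K (ω ^ i) := by
  rw [pow_add, pow_mul, hN, ← Nat.card_eq_fintype_card, ← Nat.card_eq_fintype_card,
    ← FiniteField.algebraMap_norm_eq_pow, ← map_pow, mul_comm, ← Algebra.smul_def, map_smul,
    smul_eq_mul]

theorem ne_zero_of_forall_ne_zero_eq_pow [Field E] [Fintype E] (hE : 2 < Fintype.card E) {γ : E}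
    (hγ : ∀ x : E, x ≠ 0 → ∃ k : ℕ, x = γ ^ k) : γ ≠ 0 := by
  rintro rfl
  have h01 (x : E) : x = 0 ∨ x = 1 := by
    refine or_iff_not_imp_left.2 fun hx ↦ ?_
    obtain ⟨_ | k, rfl⟩ := hγ x hx
    · exact pow_zero _
    · simp at hx
  obtain ⟨a, b, c, hab, hac, hbc⟩ := Fintype.two_lt_card_iff.1 hE
  rcases h01 a with rfl | rfl <;> rcases h01 b with rfl | rfl <;> rcases h01 c with rfl | rfl <;>
    simp_all

theorem union_cosets_eq_setOf_trace_norm_eq_zero [Field E] [Fintype E] [Algebra K E] {N : ℕ}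
    (hN : N = (Fintype.card K - 1) / (Fintype.card F - 1)) {γ : E} (hγ0 : γ ≠ 0)
    (hγ : ∀ x : E, x ≠ 0 → ∃ k : ℕ, x = γ ^ k) :
    {x : E | ∃ i : ℕ, Algebra.trace F K (Algebra.norm K γ ^ i) = 0 ∧
      ∃ k : ℕ, x = γ ^ (i + N * k)} =
      {x : E | x ≠ 0 ∧ Algebra.trace F K (Algebra.norm K x) = 0} := by
  have hc0 : Algebra.norm F (Algebra.norm K γ) ≠ 0 :=
    Algebra.norm_ne_zero_iff.2 (Algebra.norm_ne_zero_iff.2 hγ0)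
  ext x
  constructor
  · rintro ⟨i, hi, k, rfl⟩
    exact ⟨pow_ne_zero _ hγ0, by rw [map_pow, trace_pow_add_mul hN, hi, mul_zero]⟩
  · rintro ⟨hx0, hx⟩
    obtain ⟨j, rfl⟩ := hγ x hx0
    refine ⟨j % N, ?_, j / N, by rw [Nat.mod_add_div]⟩
    rw [map_pow, ← Nat.mod_add_div j N, trace_pow_add_mul hN] at hx
    exact (mul_eq_zero.1 hx).resolve_left (pow_ne_zero _ hc0)

end ConnectionSet

theorem subfield_case_elliptic_form_general
    (q m : ℕ)
    (F : Type) [Field F] [Fintype F]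
    (K : Type) [Field K] [Fintype K] [Algebra F K]
    (E : Type) [Field E] [Fintype E] [Algebra F E] [Algebra K E] [IsScalarTower F K E]
    (hF : Fintype.card F = q) (hK : Fintype.card K = q ^ m)
    (hE : Fintype.card E = q ^ (2 * m))
    (N : ℕ) (hN : N = (q ^ m - 1) / (q - 1))
    (γ : E) (hγ : ∀ x : E, x ≠ 0 → ∃ k : ℕ, x = γ ^ k)
    (ω : K) (hω : ω = Algebra.norm K γ) :
    (∀ x : E, algebraMap K E (Algebra.norm K x) = x ^ (q ^ m + 1)) ∧
    ({x : E | ∃ i : ℕ, Algebra.trace F K (ω ^ i) = 0 ∧ ∃ k : ℕ, x = γ ^ (i + N * k)} =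
      {x : E | x ≠ 0 ∧ Algebra.trace F K (Algebra.norm K x) = 0}) ∧
    (∃ Φ : QuadraticForm F E,
      (∀ x : E, Φ x = Algebra.trace F K (Algebra.norm K x)) ∧
      (∀ x : E, (∀ y : E, QuadraticMap.polar (⇑Φ) x y = 0) → Φ x = 0 → x = 0) ∧
      (∀ W : Submodule F E, (∀ x ∈ W, Φ x = 0) → Module.finrank F W ≤ m - 1) ∧
      (∃ W : Submodule F E, (∀ x ∈ W, Φ x = 0) ∧ Module.finrank F W = m - 1)) := by
  classical
  subst hω
  have hKE : Module.finrank K E = 2 :=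
    Module.finrank_eq_of_card_eq_pow (by rw [hE, hK, ← pow_mul, mul_comm])
  have hFE : Module.finrank F E = 2 * m := Module.finrank_eq_of_card_eq_pow (by rw [hE, hF])
  have hγ0 : γ ≠ 0 := by
    refine ne_zero_of_forall_ne_zero_eq_pow ?_ hγ
    rw [Module.card_eq_pow_finrank (K := K), hKE]
    nlinarith [Fintype.one_lt_card (α := K)]
  have hB := nondegenerate_polarBilin_traceNormForm (F := F) hKE
  have hZ := card_traceNormForm_eq_zero (F := F) hKE
  rw [show Fintype.card K = Fintype.card F ^ m by rw [hK, hF], ← pow_succ, ← pow_mul,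
    mul_comm m 2] at hZ
  refine ⟨fun x ↦ by rw [algebraMap_norm_eq_pow_card_add_one hKE, hK],
    union_cosets_eq_setOf_trace_norm_eq_zero (by rw [hK, hF, hN]) hγ0 hγ,
    traceNormForm F hKE, traceNormForm_apply hKE, fun x hx _ ↦ hB.1 x hx,
    fun W hW ↦ IsTotallySingular.finrank_le_sub_one hFE hB hZ hW,
    exists_isTotallySingular_finrank_eq hFE hB hZ le_rfl⟩

/-- The subfield case of the elliptic lifting construction.  Let `F = F_q ≤ K = F_{q^m}
≤ E = F_{q^{2m}}`, `N = (q^m−1)/(q−1)`, `γ` a primitive element of `E` and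
`ω = N_{E/K}(γ)` (so that `algebraMap K E ω = γ^{q^m+1}`, and generally
`algebraMap K E (N_{E/K} x) = x^{q^m+1}`).  The subdifference set is the Singer
difference set `I = {i : Tr_{K/F}(ω^i) = 0}`, and the connection set
`E' = ∪_{i∈I} γ^i⟨γ^N⟩` equals `{x ∈ E* : Tr_{q^m/q}(x^{q^m+1}) = 0}`.  Moreover
`x ↦ Tr_{q^m/q}(x^{q^m+1})` is a nondegenerate `F_q`-valued quadratic form of elliptic
type on `E` (as a `2m`-dimensional `F_q`-vector space): every totally singular
`F`-subspace has dimension at most `m − 1`, and dimension `m − 1` is attained. -/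
theorem subfield_case_elliptic_form (p : ℕ) [Fact p.Prime]
    (q m : ℕ) (hq1 : 1 < q) (hm : 0 < m)
    (F : Type) [Field F] [Fintype F]
    (K : Type) [Field K] [Fintype K] [Algebra F K]
    (E : Type) [Field E] [Fintype E] [Algebra F E] [Algebra K E] [IsScalarTower F K E]
    (hF : Fintype.card F = q) (hK : Fintype.card K = q ^ m)
    (hE : Fintype.card E = q ^ (2 * m))
    (N : ℕ) (hN : N = (q ^ m - 1) / (q - 1))
    (γ : E) (hγ : ∀ x : E, x ≠ 0 → ∃ k : ℕ, x = γ ^ k)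
    (ω : K) (hω : ω = Algebra.norm K γ) :
    (∀ x : E, algebraMap K E (Algebra.norm K x) = x ^ (q ^ m + 1)) ∧
    ({x : E | ∃ i : ℕ, Algebra.trace F K (ω ^ i) = 0 ∧ ∃ k : ℕ, x = γ ^ (i + N * k)} =
      {x : E | x ≠ 0 ∧ Algebra.trace F K (Algebra.norm K x) = 0}) ∧
    (∃ Φ : QuadraticForm F E,
      (∀ x : E, Φ x = Algebra.trace F K (Algebra.norm K x)) ∧
      (∀ x : E, (∀ y : E, QuadraticMap.polar (⇑Φ) x y = 0) → Φ x = 0 → x = 0) ∧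
      (∀ W : Submodule F E, (∀ x ∈ W, Φ x = 0) → Module.finrank F W ≤ m - 1) ∧
      (∃ W : Submodule F E, (∀ x ∈ W, Φ x = 0) ∧ Module.finrank F W = m - 1)) :=
  subfield_case_elliptic_form_general q m F K E hF hK hE N hN γ hγ ω hω
end

section
/- Let q be an odd prime power, m > 1 odd, a_1, ..., a_{(m−1)/2} ∈ F_{q^m} linearly independent over F_q with Tr_{q^m/q}(a_i a_j) = 0 for all i, j, and let b ∈ F_{q^m} with Tr_{q^m/q}(a_i b) = 0 for all i and Tr_{q^m/q}(b²) ≠ 0. Let B = {a_1x_1 + ... + a_{(m−1)/2}x_{(m−1)/2} + by : x_i ∈ F_q, y ∈ C_0^{(2,q)}}, where C_0^{(2,q)} is the set of nonzero squares of F_q. Then for any α ∈ F_{q^m}*, the canonical additive character sum ψ_{F_{q^m}}(αB) equals: q^{(m−1)/2}(−1+G_q(η'))/2 if Tr_{q^m/q}(αb) is a nonzero square and Tr_{q^m/q}(αa_i) = 0 for all i; q^{(m−1)/2}(−1−G_q(η'))/2 if Tr_{q^m/q}(αb) is a nonsquare and Tr_{q^m/q}(αa_i) = 0 for all i; q^{(m−1)/2}(q−1)/2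 if Tr_{q^m/q}(αa_i) = 0 for all i and Tr_{q^m/q}(αb) = 0; and 0 otherwise. -/
open Finset

/-- The canonical additive character as a bundled `AddChar`. -/
noncomputable def psiOf (p : ℕ) [NeZero p] (F : Type) [Field F] [Fintype F]
    [Algebra (ZMod p) F] : AddChar F ℂ :=
  (ZMod.stdAddChar (N := p)).compAddMonoidHom (Algebra.trace (ZMod p) F).toAddMonoidHom

lemma psiOf_apply (p : ℕ) [NeZero p] (F : Type) [Field F] [Fintype F] [Algebra (ZMod p) F]
    (x : F) : psiOf p F x = ZMod.stdAddChar (Algebra.trace (ZMod p) F x) := rfl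

lemma stdAddChar_eq_psiOf (p : ℕ) [NeZero p] (F : Type) [Field F] [Fintype F]
    [Algebra (ZMod p) F] (x : F) : stdAddChar p F x = psiOf p F x := by
  rw [psiOf_apply]
  set t := Algebra.trace (ZMod p) F x with ht
  have h1 : ((t.val : ℤ) : ZMod p) = t := by
    push_cast
    exact ZMod.natCast_rightInverse t
  rw [← h1, ZMod.stdAddChar_coe]
  unfold stdAddChar
  rw [← ht]
  push_cast
  ring_nf

lemma psiOf_prim (p : ℕ) [Fact p.Prime] (F : Type) [Field F] [Fintype F]
    [Algebra (ZMod p) F] : (psiOf p F).IsPrimitive := by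
  haveI : NeZero p := ⟨(Fact.out (p := p.Prime)).ne_zero⟩
  apply AddChar.IsPrimitive.of_ne_one
  intro h
  obtain ⟨x, hx⟩ : ∃ x, Algebra.trace (ZMod p) F x ≠ 0 := by
    by_contra hc; push_neg at hc
    exact Algebra.trace_ne_zero (ZMod p) F (LinearMap.ext hc)
  apply hx
  have h1 : psiOf p F x = 1 := by rw [h]; rfl
  have h2 : ZMod.stdAddChar (N := p) (Algebra.trace (ZMod p) F x)
      = ZMod.stdAddChar (N := p) 0 := by
    rw [AddChar.map_zero_eq_one]; exact h1
  exact ZMod.injective_stdAddChar h2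

lemma addChar_map_sum {ι A M : Type*} [AddCommMonoid A] [CommMonoid M] (ψ : AddChar A M)
    (s : Finset ι) (f : ι → A) : ψ (∑ i ∈ s, f i) = ∏ i ∈ s, ψ (f i) := by
  induction s using Finset.cons_induction with
  | empty => simp
  | cons a s ha ih => rw [Finset.sum_cons, Finset.prod_cons, ψ.map_add_eq_mul, ih]

lemma quad_mul_sum (p : ℕ) [Fact p.Prime] [NeZero p] (F : Type) [Field F] [Fintype F]
    [DecidableEq F] [Algebra (ZMod p) F] {t : F} (ht : t ≠ 0) :
    ((quadraticChar F t : ℤ) : ℂ) *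
      ∑ y : F, ((quadraticChar F).ringHomComp (Int.castRingHom ℂ)) y * psiOf p F (y * t) =
    gaussSum ((quadraticChar F).ringHomComp (Int.castRingHom ℂ)) (psiOf p F) := by
  set η := (quadraticChar F).ringHomComp (Int.castRingHom ℂ) with hη
  set ψ := psiOf p F with hψ
  have h := gaussSum_mulShift η ψ (Units.mk0 t ht)
  have e1 : ((quadraticChar F t : ℤ) : ℂ) = η ((Units.mk0 t ht : Fˣ) : F) := by
    simp [hη, MulChar.ringHomComp]
  have e2 : ∑ y : F, η y * ψ (y * t) = gaussSum η (ψ.mulShift ((Units.mk0 t ht : Fˣ) : F)) := by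
    unfold gaussSum
    refine Finset.sum_congr rfl fun y _ => ?_
    rw [AddChar.mulShift_apply, Units.val_mk0, mul_comm t y]
  rw [e1, e2, h]

/-- Mid-form evaluation of the sum of `ψ(y t)` over nonzero squares `y`. -/
lemma sq_filter_sum (p : ℕ) [Fact p.Prime] (hp : p ≠ 2) (F : Type) [Field F] [Fintype F]
    [DecidableEq F] [Algebra (ZMod p) F] (t : F) :
    ∑ y ∈ univ.filter (fun y : F => y ≠ 0 ∧ IsSquare y), psiOf p F (y * t) =
      ((if t = 0 then (Fintype.card F : ℂ) else 0) +
        (∑ y : F, ((quadraticChar F).ringHomComp (Int.castRingHom ℂ)) y * psiOf p F (y * t))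
        - 1) / 2 := by
  haveI : NeZero p := ⟨(Fact.out (p := p.Prime)).ne_zero⟩
  set η := (quadraticChar F).ringHomComp (Int.castRingHom ℂ) with hη
  set ψ := psiOf p F with hψ
  have key : ∀ y : F, (if y ≠ 0 ∧ IsSquare y then ψ (y * t) else 0)
      = (ψ (y * t) + η y * ψ (y * t)) / 2 - (if y = 0 then 1/2 else 0) := by
    intro y
    by_cases hy : y = 0
    · subst hy
      simp only [ne_eq, not_true_eq_false, false_and, if_false, if_true, zero_mul,
        AddChar.map_zero_eq_one]
      have : η (0 : F) = 0 := by simp [hη, MulChar.ringHomComp]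
      rw [this]; ring
    · by_cases hsq : IsSquare y
      · have h1 : η y = 1 := by
          simp only [hη, MulChar.ringHomComp_apply,
            (quadraticChar_one_iff_isSquare hy).mpr hsq]
          norm_num
        simp only [hy, hsq, ne_eq, not_false_eq_true, true_and, if_true, if_false, h1]
        ring
      · have h1 : η y = -1 := by
          simp only [hη, MulChar.ringHomComp_apply,
            quadraticChar_neg_one_iff_not_isSquare.mpr hsq]
          norm_num
        simp only [hy, hsq, ne_eq, not_false_eq_true, true_and, and_false, if_false, h1]
        ring
  rw [Finset.sum_filter]
  simp_rw [key]
  rw [Finset.sum_sub_distrib]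
  have h2 : ∑ y : F, (if y = 0 then (1:ℂ)/2 else 0) = 1/2 := by
    rw [Finset.sum_ite_eq' univ (0 : F) (fun _ => (1:ℂ)/2)]
    simp
  rw [h2]
  have h3 : ∑ y : F, (ψ (y * t) + η y * ψ (y * t)) / 2
      = ((∑ y : F, ψ (y * t)) + ∑ y : F, η y * ψ (y * t)) / 2 := by
    rw [← Finset.sum_add_distrib, ← Finset.sum_div]
  rw [h3]
  have h4 : ∑ y : F, ψ (y * t) = if t = 0 then (Fintype.card F : ℂ) else 0 := by
    have := AddChar.sum_mulShift (ψ := ψ) t (psiOf_prim p F)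
    rw [this]
    split_ifs <;> simp
  rw [h4]
  ring

open Classical in
/-- Character sums over the set `B` (Lemma on `ψ(ω^a B)`).  Let `q` be an odd prime
power, `m > 1` odd, `a_1, …, a_{(m−1)/2} ∈ F_{q^m}` linearly independent over `F_q` with
`Tr(a_i a_j) = 0` for all `i, j`, and `b` with `Tr(a_i b) = 0` for all `i` and
`Tr(b²) ≠ 0`.  With `B = {∑ a_i x_i + by : x_i ∈ F_q, y a nonzero square}`, the value of
`∑_{z ∈ B} ψ(αz)` is `q^{(m−1)/2}(−1+G_q(η'))/2`, `q^{(m−1)/2}(−1−G_q(η'))/2`,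
`q^{(m−1)/2}(q−1)/2`, or `0`, according to the four stated cases. -/
theorem char_sum_over_B (p : ℕ) [Fact p.Prime] (hp : p ≠ 2)
    (q m : ℕ) (hq1 : 1 < q) (hm1 : 1 < m) (hmodd : Odd m)
    (F : Type) [Field F] [Fintype F] [DecidableEq F] [Algebra (ZMod p) F]
    (hF : Fintype.card F = q)
    (K : Type) [Field K] [Fintype K] [Algebra (ZMod p) K] [Algebra F K]
    (hK : Fintype.card K = q ^ m)
    (a : Fin ((m - 1) / 2) → K) (ha : LinearIndependent F a)
    (haa : ∀ i j, Algebra.trace F K (a i * a j) = 0)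
    (b : K) (hab : ∀ i, Algebra.trace F K (a i * b) = 0)
    (hb : Algebra.trace F K (b ^ 2) ≠ 0)
    (B : Set K)
    (hB : B = {z : K | ∃ (x : Fin ((m - 1) / 2) → F) (y : F), y ≠ 0 ∧ IsSquare y ∧
      z = (∑ i, algebraMap F K (x i) * a i) + algebraMap F K y * b})
    (α : K) (hα : α ≠ 0) :
    ((∀ i, Algebra.trace F K (α * a i) = 0) → Algebra.trace F K (α * b) ≠ 0 →
      IsSquare (Algebra.trace F K (α * b)) →
      ∑ z ∈ univ.filter (· ∈ B), stdAddChar p K (α * z) =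
        (q : ℂ) ^ ((m - 1) / 2) *
          (-1 + gaussSum' p F ((quadraticChar F).ringHomComp (Int.castRingHom ℂ))) / 2) ∧
    ((∀ i, Algebra.trace F K (α * a i) = 0) →
      ¬ IsSquare (Algebra.trace F K (α * b)) →
      ∑ z ∈ univ.filter (· ∈ B), stdAddChar p K (α * z) =
        (q : ℂ) ^ ((m - 1) / 2) *
          (-1 - gaussSum' p F ((quadraticChar F).ringHomComp (Int.castRingHom ℂ))) / 2) ∧
    ((∀ i, Algebra.trace F K (α * a i) = 0) → Algebra.trace F K (α * b) = 0 →
      ∑ z ∈ univ.filter (· ∈ B), stdAddChar p K (α * z) =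
        (q : ℂ) ^ ((m - 1) / 2) * ((q : ℂ) - 1) / 2) ∧
    ((¬ ∀ i, Algebra.trace F K (α * a i) = 0) →
      ∑ z ∈ univ.filter (· ∈ B), stdAddChar p K (α * z) = 0) := by
  haveI : NeZero p := ⟨(Fact.out (p := p.Prime)).ne_zero⟩
  haveI : IsScalarTower (ZMod p) F K := IsScalarTower.of_algebraMap_eq' (Subsingleton.elim _ _)
  set η := (quadraticChar F).ringHomComp (Int.castRingHom ℂ) with hη
  set ψF := psiOf p F with hψF
  set ψK := psiOf p K with hψK
  set t : Fin ((m - 1) / 2) → F := fun i => Algebra.trace F K (α * a i) with htdef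
  set t0 : F := Algebra.trace F K (α * b) with ht0def
  set S : Finset F := univ.filter (fun y : F => y ≠ 0 ∧ IsSquare y) with hS
  set f : (Fin ((m - 1) / 2) → F) × F → K :=
    fun u => (∑ i, algebraMap F K (u.1 i) * a i) + algebraMap F K u.2 * b with hf
  -- injectivity of the parametrization
  have hinj : Function.Injective f := by
    rintro ⟨x, y⟩ ⟨x', y'⟩ h
    simp only [hf] at h
    have key : ∑ i, (x i - x' i) • a i + (y - y') • b = 0 := by
      have h' : ((∑ i, x i • a i) + y • b) - ((∑ i, x' i • a i) + y' • b) = 0 := by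
        rw [sub_eq_zero]
        simpa [Algebra.smul_def] using h
      calc ∑ i, (x i - x' i) • a i + (y - y') • b
          = ((∑ i, x i • a i) + y • b) - ((∑ i, x' i • a i) + y' • b) := by
            rw [Finset.sum_congr rfl (fun i _ => sub_smul (x i) (x' i) (a i)),
              Finset.sum_sub_distrib, sub_smul]
            ring
        _ = 0 := h'
    have h2 : Algebra.trace F K (b * (∑ i, (x i - x' i) • a i + (y - y') • b))
        = (y - y') * Algebra.trace F K (b ^ 2) := by
      rw [mul_add, Finset.mul_sum]
      simp only [mul_smul_comm]
      rw [map_add, map_sum]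
      simp only [map_smul, smul_eq_mul]
      have hz : ∀ i, Algebra.trace F K (b * a i) = 0 := fun i => by
        rw [mul_comm]; exact hab i
      simp only [hz, mul_zero, Finset.sum_const_zero, zero_add]
      rw [← pow_two]
    rw [key, mul_zero, map_zero] at h2
    have hyy : y = y' := by
      rcases mul_eq_zero.mp h2.symm with h3 | h3
      · exact sub_eq_zero.mp h3
      · exact absurd h3 hb
    have hxx : ∀ i, x i - x' i = 0 := by
      have key' : ∑ i, (x i - x' i) • a i = 0 := by
        rw [hyy, sub_self, zero_smul, add_zero] at key
        exact key
      exact Fintype.linearIndependent_iff.mp ha _ key'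
    refine Prod.ext ?_ hyy
    funext i
    exact sub_eq_zero.mp (hxx i)
  -- the filter as an image
  have himg : univ.filter (· ∈ B)
      = ((univ : Finset (Fin ((m - 1) / 2) → F)) ×ˢ S).image f := by
    ext z
    simp only [mem_filter, mem_univ, true_and, mem_image, mem_product, hB, Set.mem_setOf_eq,
      hf, hS]
    constructor
    · rintro ⟨x, y, h1, h2, rfl⟩
      exact ⟨(x, y), ⟨h1, h2⟩, rfl⟩
    · rintro ⟨⟨x, y⟩, ⟨h1, h2⟩, rfl⟩
      exact ⟨x, y, h1, h2, rfl⟩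
  -- pushing the character through the parametrization
  have hsmul : ∀ (c : F) (w : K), ψK (c • w) = ψF (c * Algebra.trace F K w) := by
    intro c w
    rw [hψK, hψF, psiOf_apply, psiOf_apply]
    congr 1
    rw [← Algebra.trace_trace (S := F) (x := c • w), map_smul, smul_eq_mul]
  have hterm : ∀ u : (Fin ((m - 1) / 2) → F) × F,
      stdAddChar p K (α * f u) = (∏ i, ψF (u.1 i * t i)) * ψF (u.2 * t0) := by
    rintro ⟨x, y⟩
    have hsplit : α * f (x, y) = (∑ i, x i • (α * a i)) + y • (α * b) := by
      simp only [hf, Algebra.smul_def, mul_add, Finset.mul_sum]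
      congr 1
      · exact Finset.sum_congr rfl fun i _ => by ring
      · ring
    rw [stdAddChar_eq_psiOf, ← hψK, hsplit, ψK.map_add_eq_mul,
      addChar_map_sum ψK univ (fun i => x i • (α * a i))]
    rw [Finset.prod_congr rfl fun i _ => hsmul (x i) (α * a i), hsmul y (α * b)]
  -- the main factorization
  have hmain : ∑ z ∈ univ.filter (· ∈ B), stdAddChar p K (α * z)
      = (∏ i, if t i = 0 then (q : ℂ) else 0) * (∑ y ∈ S, ψF (y * t0)) := by
    rw [himg, Finset.sum_image (fun u _ v _ h => hinj h), Finset.sum_product]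
    simp_rw [hterm]
    rw [← Finset.sum_mul_sum]
    congr 1
    rw [← Fintype.prod_sum (f := fun i c => ψF (c * t i))]
    refine Finset.prod_congr rfl fun i _ => ?_
    rw [AddChar.sum_mulShift (t i) (by rw [hψF]; exact psiOf_prim p F), hF]
    split_ifs <;> simp
  have hsq := sq_filter_sum p hp F t0
  rw [← hS, ← hψF, ← hη, hF] at hsq
  have hGq : gaussSum' p F η = gaussSum η ψF := by
    unfold gaussSum' gaussSum
    exact Finset.sum_congr rfl fun x _ => by rw [stdAddChar_eq_psiOf, hψF]
  refine ⟨?_, ?_, ?_, ?_⟩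
  · -- case 1 : all traces of a_i vanish, trace of b nonzero square
    intro h1 h2 h3
    have h1' : ∀ i, t i = 0 := fun i => h1 i
    have h2' : t0 ≠ 0 := h2
    have h3' : IsSquare t0 := h3
    have hP : (∏ i, if t i = 0 then (q : ℂ) else 0) = (q : ℂ) ^ ((m - 1) / 2) := by
      rw [Finset.prod_congr rfl fun i _ => if_pos (h1' i), Finset.prod_const,
        Finset.card_univ, Fintype.card_fin]
    have hQ : ∑ y : F, η y * ψF (y * t0) = gaussSum η ψF := by
      have hh := quad_mul_sum p F (t := t0) h2'
      rw [← hη, ← hψF, (quadraticChar_one_iff_isSquare h2').mpr h3'] at hh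
      simpa using hh
    rw [hmain, hP, hsq, if_neg h2', hQ, hGq]
    ring
  · -- case 2 : all traces of a_i vanish, trace of b a nonsquare
    intro h1 h3
    have h1' : ∀ i, t i = 0 := fun i => h1 i
    have h3' : ¬ IsSquare t0 := h3
    have h2' : t0 ≠ 0 := fun h => h3' (h ▸ ⟨0, by simp⟩)
    have hP : (∏ i, if t i = 0 then (q : ℂ) else 0) = (q : ℂ) ^ ((m - 1) / 2) := by
      rw [Finset.prod_congr rfl fun i _ => if_pos (h1' i), Finset.prod_const,
        Finset.card_univ, Fintype.card_fin]
    have hQ : ∑ y : F, η y * ψF (y * t0) = -gaussSum η ψF := by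
      have hh := quad_mul_sum p F (t := t0) h2'
      rw [← hη, ← hψF, quadraticChar_neg_one_iff_not_isSquare.mpr h3'] at hh
      push_cast at hh
      linear_combination -hh
    rw [hmain, hP, hsq, if_neg h2', hQ, hGq]
    ring
  · -- case 3 : all traces vanish
    intro h1 h2
    have h1' : ∀ i, t i = 0 := fun i => h1 i
    have h2' : t0 = 0 := h2
    have hP : (∏ i, if t i = 0 then (q : ℂ) else 0) = (q : ℂ) ^ ((m - 1) / 2) := by
      rw [Finset.prod_congr rfl fun i _ => if_pos (h1' i), Finset.prod_const,
        Finset.card_univ, Fintype.card_fin]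
    have hQ : ∑ y : F, η y * ψF (y * t0) = 0 := by
      haveI : CharP F p := charP_of_injective_ringHom (algebraMap (ZMod p) F).injective p
      have hchar : ringChar F ≠ 2 := by rw [ringChar.eq F p]; exact hp
      have hzero : ∑ y : F, ((quadraticChar F y : ℤ) : ℂ) = 0 := by
        rw [← Int.cast_sum, quadraticChar_sum_zero hchar, Int.cast_zero]
      calc ∑ y : F, η y * ψF (y * t0)
          = ∑ y : F, ((quadraticChar F y : ℤ) : ℂ) := by
            refine Finset.sum_congr rfl fun y _ => ?_
            rw [h2', mul_zero, AddChar.map_zero_eq_one, mul_one]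
            rfl
        _ = 0 := hzero
    rw [hmain, hP, hsq, if_pos h2', hQ]
    ring
  · -- case 4 : some trace of a_i does not vanish
    intro h1
    push_neg at h1
    obtain ⟨i, hi⟩ := h1
    have hi' : t i ≠ 0 := hi
    have hP : (∏ i, if t i = 0 then (q : ℂ) else 0) = 0 :=
      Finset.prod_eq_zero (mem_univ i) (if_neg hi')
    rw [hmain, hP, zero_mul]
end
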